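/- arXiv:2303.01552 — 2 statements merged into one kernel-verified Lean document; each statement's English description precedes it below -/
import Mathlib

section
/- Assume every true-null statistic is uniformly stochastically larger than every negative control statistic and all statistics are mutually independent with continuous CDFs and values in (0,1). Let F_t = σ(V(s), S(s), V_nc(s) : t ≤ s ≤ 1) be the backward filtration and define M(t) = V(t)·(1+m)/(1+V_nc(t)). Then M is a backward super-martingale: for all 0 ≤ s ≤ t ≤ 1 there exists 0 ≤ p_t^s ≤ 1 (any number with max over true nulls i of F_i(s)/F_i(t) ≤ p_t^s ≤ min over negative controls j of F_j(s)/F_j(t)) such that E[M(s) | F_t] ≤ M(t)·(1 − (1 − p_t^s)^{V_nc(t)+1}) ≤ M(t). -/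
open MeasureTheory ProbabilityTheory
open scoped ENNReal

/-- `X` is uniformly stochastically larger than `Y` (both `[0,1]`-valued):
`P(X ≤ t) > 0`, `P(Y ≤ t) > 0`, and `P(X ≤ s | X ≤ t) ≤ P(Y ≤ s | Y ≤ t)` for all
`0 < s ≤ t ≤ 1`. -/
def UnifStochLarger {Ω : Type*} [MeasurableSpace Ω] (μ : Measure Ω)
    (X Y : Ω → ℝ) : Prop :=
  ∀ s t : ℝ, 0 < s → s ≤ t → t ≤ 1 →
    0 < μ {ω | X ω ≤ t} ∧ 0 < μ {ω | Y ω ≤ t} ∧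
      μ {ω | X ω ≤ s} / μ {ω | X ω ≤ t} ≤ μ {ω | Y ω ≤ s} / μ {ω | Y ω ≤ t}

/-- The (right-continuous) CDF of a real random variable `X` under `μ`. -/
noncomputable def cdf' {Ω : Type*} [MeasurableSpace Ω] (μ : Measure Ω) (X : Ω → ℝ) (t : ℝ) : ℝ :=
  (μ {ω | X ω ≤ t}).toReal

/-- The random variable `X` has a continuous CDF under `μ`. -/
def ContinuousCDF {Ω : Type*} [MeasurableSpace Ω] (μ : Measure Ω) (X : Ω → ℝ) : Prop :=
  Continuous (cdf' μ X)

/-- `V(t)`: number of true-null investigated statistics at most `t`. -/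
noncomputable def Vcount {Ω : Type*} (n m : ℕ) (T : Fin (n + m) → Ω → ℝ)
    (I₀ : Set (Fin n)) (ω : Ω) (t : ℝ) : ℕ :=
  ({i : Fin n | i ∈ I₀ ∧ T (Fin.castAdd m i) ω ≤ t} : Set (Fin n)).ncard

/-- `S(t)`: number of non-null investigated statistics at most `t`. -/
noncomputable def Scount {Ω : Type*} (n m : ℕ) (T : Fin (n + m) → Ω → ℝ)
    (I₀ : Set (Fin n)) (ω : Ω) (t : ℝ) : ℕ :=
  ({i : Fin n | i ∉ I₀ ∧ T (Fin.castAdd m i) ω ≤ t} : Set (Fin n)).ncard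

/-- `V_nc(t)`: number of negative control statistics at most `t`. -/
noncomputable def VncCount {Ω : Type*} (n m : ℕ) (T : Fin (n + m) → Ω → ℝ)
    (ω : Ω) (t : ℝ) : ℕ :=
  ({j : Fin m | T (Fin.natAdd n j) ω ≤ t} : Set (Fin m)).ncard

/-- The backward filtration `F_t = σ(V(s), S(s), V_nc(s) : t ≤ s ≤ 1)`. -/
noncomputable def backFiltration {Ω : Type*} (n m : ℕ) (T : Fin (n + m) → Ω → ℝ)
    (I₀ : Set (Fin n)) (t : ℝ) : MeasurableSpace Ω :=
  ⨆ s ∈ Set.Icc t (1 : ℝ),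
    MeasurableSpace.comap
      (fun ω => (Vcount n m T I₀ ω s, Scount n m T I₀ ω s, VncCount n m T ω s))
      (⊤ : MeasurableSpace (ℕ × ℕ × ℕ))

/-- The process `M(t) = V(t)·(1+m)/(1+V_nc(t))`. -/
noncomputable def Mproc {Ω : Type*} (n m : ℕ) (T : Fin (n + m) → Ω → ℝ)
    (I₀ : Set (Fin n)) (t : ℝ) (ω : Ω) : ℝ :=
  (Vcount n m T I₀ ω t : ℝ) * (1 + (m : ℝ)) / (1 + (VncCount n m T ω t : ℝ))

/-!
Conditioning on `F_t` is coarser than conditioning on the statistics censored at `t`,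
`max (T k) t`, so it suffices to compare `∫_A M(s)` with `∫_A M(t) (1 - (1 - p) ^ (V_nc(t) + 1))`
on events `A` determined by the censored vector. Split `A` according to the set `D` of statistics
below `t` and the set `E ⊆ D` of those below `s`. By independence the censored vector is
independent of the statistics in `D`, each of which lies below `s` with probability
`F_k(s) / F_k(t)`: at most `p` for a true null, at least `p` for a control. Pulling out one true
null `i ∈ D` and writing `1 / (1 + c) = ∫₀¹ uᶜ du`, the contribution of `i` is at most
`p ∫₀¹ (1 - p + p u) ^ c du = (1 - (1 - p) ^ (c + 1)) / (c + 1)`, where `c` is the number of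
controls in `D`.
-/

open Finset

section SplitWeights

variable {κ : Type*} [DecidableEq κ]

def splitWeight (q w : κ → ℝ) (D E : Finset κ) : ℝ :=
  (∏ k ∈ E, q k) * ∏ k ∈ D \ E, (w k - q k)

noncomputable def countRatio (N C D : Finset κ) : ℝ :=
  #(D ∩ N) / (1 + #(D ∩ C))

lemma splitWeight_nonneg {q w : κ → ℝ} (hq : ∀ k, 0 ≤ q k) (hqw : ∀ k, q k ≤ w k)
    (D E : Finset κ) : 0 ≤ splitWeight q w D E :=
  mul_nonneg (prod_nonneg fun k _ => hq k) (prod_nonneg fun k _ => sub_nonneg.2 (hqw k))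

lemma sum_powerset_splitWeight (q w : κ → ℝ) (D : Finset κ) :
    ∑ E ∈ D.powerset, splitWeight q w D E = ∏ k ∈ D, w k := by
  simp [splitWeight, ← prod_add]

lemma prod_ite_mem_mul (X C : Finset κ) (u : ℝ) (a : κ → ℝ) :
    ∏ k ∈ X, (if k ∈ C then u * a k else a k) = u ^ #(X ∩ C) * ∏ k ∈ X, a k := by
  rw [prod_ite, prod_mul_distrib, prod_const, filter_mem_eq_inter, mul_assoc,
    ← filter_mem_eq_inter, prod_filter_mul_prod_filter_not]

lemma integral_mul_one_sub_add_mul_pow (p : ℝ) (c : ℕ) :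
    ∫ u in (0 : ℝ)..1, p * (1 - p + p * u) ^ c = (1 - (1 - p) ^ (c + 1)) / (c + 1) := by
  have hderiv : ∀ u ∈ Set.uIcc (0 : ℝ) 1,
      HasDerivAt (fun v => (1 - p + p * v) ^ (c + 1) / (c + 1)) (p * (1 - p + p * u) ^ c) u := by
    intro u _
    have hlin : HasDerivAt (fun v : ℝ => 1 - p + p * v) p u := by
      simpa using ((hasDerivAt_id u).const_mul p).const_add (1 - p)
    refine ((hlin.pow (c + 1)).div_const ((c : ℝ) + 1)).congr_deriv ?_
    push_cast
    field_simp
  rw [intervalIntegral.integral_eq_sub_of_hasDerivAt hderiv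
    (Continuous.intervalIntegrable (by fun_prop) _ _)]
  ring_nf

/-- `1 / (1 + c) = ∫₀¹ uᶜ du` turns the weighted sum into the integral of a product. -/
lemma sum_powerset_splitWeight_div_eq_integral (X C : Finset κ) (q w : κ → ℝ) :
    ∑ E ∈ X.powerset, splitWeight q w X E / (1 + #(E ∩ C))
      = ∫ u in (0 : ℝ)..1, ∏ k ∈ X, ((if k ∈ C then u * q k else q k) + (w k - q k)) := by
  have hexpand : ∀ u : ℝ, ∏ k ∈ X, ((if k ∈ C then u * q k else q k) + (w k - q k))
      = ∑ E ∈ X.powerset, u ^ #(E ∩ C) * splitWeight q w X E := fun u => by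
    simp only [prod_add, splitWeight, prod_ite_mem_mul, mul_assoc]
  simp only [hexpand]
  rw [intervalIntegral.integral_finsetSum fun E _ =>
    Continuous.intervalIntegrable (by fun_prop) _ _]
  refine sum_congr rfl fun E _ => ?_
  rw [intervalIntegral.integral_mul_const, integral_pow]
  ring_nf

lemma mul_sum_powerset_splitWeight_div_le (X C : Finset κ) {q w : κ → ℝ}
    (hq : ∀ k, 0 ≤ q k) (hqw : ∀ k, q k ≤ w k) {p : ℝ} (hp : 0 ≤ p)
    (hC : ∀ j ∈ C, p * w j ≤ q j) :
    p * ∑ E ∈ X.powerset, splitWeight q w X E / (1 + #(E ∩ C))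
      ≤ (1 - (1 - p) ^ (#(X ∩ C) + 1)) / (1 + #(X ∩ C)) * ∏ k ∈ X, w k := by
  have hpointwise : ∀ u ∈ Set.Icc (0 : ℝ) 1,
      ∏ k ∈ X, ((if k ∈ C then u * q k else q k) + (w k - q k))
        ≤ (1 - p + p * u) ^ #(X ∩ C) * ∏ k ∈ X, w k := by
    rintro u ⟨hu0, hu1⟩
    rw [← prod_ite_mem_mul]
    refine prod_le_prod (fun k _ => ?_) (fun k _ => ?_) <;> by_cases hk : k ∈ C <;>
      simp only [hk, if_true, if_false]
    · nlinarith [hq k, hqw k]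
    · linarith [hq k, hqw k]
    · nlinarith [hC k hk, hq k, hqw k]
    · linarith
  calc p * ∑ E ∈ X.powerset, splitWeight q w X E / (1 + #(E ∩ C))
      = ∫ u in (0 : ℝ)..1, p * ∏ k ∈ X, ((if k ∈ C then u * q k else q k) + (w k - q k)) := by
        rw [sum_powerset_splitWeight_div_eq_integral, intervalIntegral.integral_const_mul]
    _ ≤ ∫ u in (0 : ℝ)..1, p * (1 - p + p * u) ^ #(X ∩ C) * ∏ k ∈ X, w k := by
        refine intervalIntegral.integral_mono_on zero_le_one
          (Continuous.intervalIntegrable ?_ _ _) (Continuous.intervalIntegrable (by fun_prop) _ _)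
          fun u hu => by rw [mul_assoc]; exact mul_le_mul_of_nonneg_left (hpointwise u hu) hp
        refine continuous_const.mul (continuous_finsetProd _ fun k _ => ?_)
        by_cases hk : k ∈ C <;> simp only [hk, if_true, if_false] <;> fun_prop
    _ = (1 - (1 - p) ^ (#(X ∩ C) + 1)) / (1 + #(X ∩ C)) * ∏ k ∈ X, w k := by
        rw [intervalIntegral.integral_mul_const, integral_mul_one_sub_add_mul_pow, add_comm 1]

lemma splitWeight_insert {q w : κ → ℝ} {D E : Finset κ} {i : κ} (hi : i ∉ D) (hE : E ⊆ D) :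
    splitWeight q w (insert i D) (insert i E) = q i * splitWeight q w D E := by
  rw [splitWeight, splitWeight, insert_sdiff_insert, sdiff_insert_of_notMem hi,
    prod_insert fun h => hi (hE h), mul_assoc]

lemma sum_powerset_ite_mem_splitWeight_mul (q w : κ → ℝ) (f : Finset κ → ℝ) {D : Finset κ}
    {i : κ} (hi : i ∈ D) :
    ∑ E ∈ D.powerset, (if i ∈ E then splitWeight q w D E * f E else 0)
      = q i * ∑ E ∈ (D.erase i).powerset, splitWeight q w (D.erase i) E * f (insert i E) := by
  have hi' : i ∉ D.erase i := notMem_erase i D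
  conv_lhs => rw [← insert_erase hi]
  rw [sum_powerset_insert hi', mul_sum]
  have hnot : ∀ E ∈ (D.erase i).powerset, i ∉ E := fun E hE h => hi' (mem_powerset.1 hE h)
  rw [sum_eq_zero fun E hE => if_neg (hnot E hE), zero_add]
  refine sum_congr rfl fun E hE => ?_
  rw [if_pos (mem_insert_self i E), splitWeight_insert hi' (mem_powerset.1 hE)]
  ring

lemma sum_powerset_ite_mem_splitWeight_div_le {C : Finset κ} {q w : κ → ℝ}
    (hq : ∀ k, 0 ≤ q k) (hqw : ∀ k, q k ≤ w k) {p : ℝ} (hp : 0 ≤ p)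
    (hC : ∀ j ∈ C, p * w j ≤ q j) {D : Finset κ} {i : κ} (hiD : i ∈ D) (hiC : i ∉ C)
    (hqi : q i ≤ p * w i) :
    ∑ E ∈ D.powerset, (if i ∈ E then splitWeight q w D E / (1 + #(E ∩ C)) else 0)
      ≤ (1 - (1 - p) ^ (#(D ∩ C) + 1)) / (1 + #(D ∩ C)) * ∏ k ∈ D, w k := by
  have hsum := sum_powerset_ite_mem_splitWeight_mul q w (fun E => (1 + (#(E ∩ C) : ℝ))⁻¹) hiD
  simp only [insert_inter_of_notMem hiC, ← div_eq_mul_inv] at hsum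
  have hinter : D.erase i ∩ C = D ∩ C := by
    rw [erase_inter, erase_eq_of_notMem fun h => hiC (mem_inter.1 h).2]
  have herase := mul_sum_powerset_splitWeight_div_le (D.erase i) C hq hqw hp hC
  rw [hinter] at herase
  have hS := sum_nonneg fun E (_ : E ∈ (D.erase i).powerset) =>
    div_nonneg (splitWeight_nonneg hq hqw (D.erase i) E) (by positivity : (0 : ℝ) ≤ 1 + #(E ∩ C))
  calc _ = q i * ∑ E ∈ (D.erase i).powerset, splitWeight q w (D.erase i) E / (1 + #(E ∩ C)) :=
        hsum
    _ ≤ w i * (p * ∑ E ∈ (D.erase i).powerset,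
          splitWeight q w (D.erase i) E / (1 + #(E ∩ C))) := by
        rw [← mul_assoc, mul_comm (w i)]
        exact mul_le_mul_of_nonneg_right hqi hS
    _ ≤ w i * ((1 - (1 - p) ^ (#(D ∩ C) + 1)) / (1 + #(D ∩ C)) * ∏ k ∈ D.erase i, w k) :=
        mul_le_mul_of_nonneg_left herase ((hq i).trans (hqw i))
    _ = (1 - (1 - p) ^ (#(D ∩ C) + 1)) / (1 + #(D ∩ C)) * ∏ k ∈ D, w k := by
        rw [← mul_prod_erase D w hiD]
        ring

lemma sum_powerset_countRatio_mul_splitWeight_le {N C : Finset κ} (hNC : Disjoint N C)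
    {q w : κ → ℝ} (hq : ∀ k, 0 ≤ q k) (hqw : ∀ k, q k ≤ w k) {p : ℝ} (hp : 0 ≤ p)
    (hN : ∀ i ∈ N, q i ≤ p * w i) (hC : ∀ j ∈ C, p * w j ≤ q j) (D : Finset κ) :
    ∑ E ∈ D.powerset, countRatio N C E * splitWeight q w D E
      ≤ countRatio N C D * (1 - (1 - p) ^ (#(D ∩ C) + 1)) * ∏ k ∈ D, w k := by
  have hcount : ∀ E ∈ D.powerset, countRatio N C E * splitWeight q w D E
      = ∑ i ∈ D ∩ N, if i ∈ E then splitWeight q w D E / (1 + #(E ∩ C)) else 0 := by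
    intro E hE
    have hEN : E ∩ N = (D ∩ N).filter (· ∈ E) := by
      ext k
      simp only [mem_inter, mem_filter]
      exact ⟨fun h => ⟨⟨mem_powerset.1 hE h.1, h.2⟩, h.1⟩, fun h => ⟨h.2, h.1.2⟩⟩
    rw [← sum_filter, sum_const, nsmul_eq_mul, ← hEN, countRatio]
    ring
  calc ∑ E ∈ D.powerset, countRatio N C E * splitWeight q w D E
      = ∑ i ∈ D ∩ N, ∑ E ∈ D.powerset,
          (if i ∈ E then splitWeight q w D E / (1 + #(E ∩ C)) else 0) := by
        rw [sum_congr rfl hcount, sum_comm]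
    _ ≤ ∑ _i ∈ D ∩ N, (1 - (1 - p) ^ (#(D ∩ C) + 1)) / (1 + #(D ∩ C)) * ∏ k ∈ D, w k :=
        sum_le_sum fun i hi => sum_powerset_ite_mem_splitWeight_div_le hq hqw hp hC
          (mem_inter.1 hi).1 (disjoint_left.1 hNC (mem_inter.1 hi).2) (hN i (mem_inter.1 hi).2)
    _ = countRatio N C D * (1 - (1 - p) ^ (#(D ∩ C) + 1)) * ∏ k ∈ D, w k := by
        rw [sum_const, nsmul_eq_mul, countRatio]
        ring

end SplitWeights

section MeasureFacts

variable {Ω : Type*} [MeasurableSpace Ω]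

lemma cdf'_nonneg (μ : Measure Ω) (X : Ω → ℝ) (t : ℝ) : 0 ≤ cdf' μ X t :=
  ENNReal.toReal_nonneg

lemma cdf'_mono (μ : Measure Ω) [IsFiniteMeasure μ] (X : Ω → ℝ) : Monotone (cdf' μ X) :=
  fun _ _ hst =>
  measureReal_mono fun _ (hω : _ ≤ _) => hω.trans hst

lemma measureReal_preimage_Ioc {μ : Measure Ω} [IsFiniteMeasure μ] {X : Ω → ℝ}
    (hX : Measurable X) {s t : ℝ} (hst : s ≤ t) :
    μ.real (X ⁻¹' Set.Ioc s t) = cdf' μ X t - cdf' μ X s := by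
  have hsub : X ⁻¹' Set.Iic s ⊆ X ⁻¹' Set.Iic t := Set.preimage_mono (Set.Iic_subset_Iic.2 hst)
  rw [← Set.Iic_sdiff_Iic, Set.preimage_sdiff, measureReal_sdiff hsub (hX measurableSet_Iic)]
  rfl

lemma ProbabilityTheory.iIndepFun.measure_piecewise_preimage_inter_biInter {ι : Type*}
    [Fintype ι] [DecidableEq ι] {μ : Measure Ω} {T : ι → Ω → ℝ}
    (hindep : iIndepFun T μ) (hT : ∀ k, Measurable (T k)) (D : Finset ι) (c : ι → ℝ)
    {P : Set (ι → ℝ)} (hP : MeasurableSet P) {S : ι → Set ℝ} (hS : ∀ k, MeasurableSet (S k)) :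
    μ ({ω | D.piecewise c (fun k => T k ω) ∈ P} ∩ ⋂ k ∈ D, T k ⁻¹' S k)
      = μ {ω | D.piecewise c (fun k => T k ω) ∈ P} * ∏ k ∈ D, μ (T k ⁻¹' S k) := by
  let fill : (↥(Dᶜ : Finset ι) → ℝ) → ι → ℝ := fun y k =>
    if hk : k ∈ D then c k else y ⟨k, mem_compl.2 hk⟩
  have hfill : Measurable fill := measurable_pi_lambda _ fun k => by
    by_cases hk : k ∈ D
    · simp only [fill, hk, dite_true, measurable_const]
    · simp only [fill, hk, dite_false]
      exact measurable_pi_apply _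
  have hout : {ω | D.piecewise c (fun k => T k ω) ∈ P}
      = (fun ω (i : ↥(Dᶜ : Finset ι)) => T i ω) ⁻¹' (fill ⁻¹' P) := by
    ext ω
    rfl
  have hin : ⋂ k ∈ D, T k ⁻¹' S k = (fun ω (i : D) => T i ω) ⁻¹' Set.univ.pi fun i => S i := by
    ext ω
    simp
  rw [Set.inter_comm, hin, hout, (hindep.indepFun_finset D Dᶜ disjoint_compl_right
    hT).measure_inter_preimage_eq_mul _ _ (MeasurableSet.univ_pi fun i => hS i) (hfill hP), ← hin,
    hindep.meas_biInter fun k _ => ⟨S k, hS k, rfl⟩, mul_comm]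

lemma setIntegral_comp_eq_sum {α : Type*} {μ : Measure Ω} [IsFiniteMeasure μ] [Fintype α]
    [MeasurableSpace α] [MeasurableSingletonClass α] {π : Ω → α} (hπ : Measurable π)
    (h : α → ℝ) (A : Set Ω) :
    ∫ ω in A, h (π ω) ∂μ = ∑ a, h a * μ.real (A ∩ π ⁻¹' {a}) := by
  rw [← integral_map hπ.aemeasurable (measurable_of_countable h).aestronglyMeasurable,
    integral_fintype Integrable.of_finite]
  refine sum_congr rfl fun a _ => ?_
  rw [smul_eq_mul, mul_comm, measureReal_def, Measure.map_apply hπ (measurableSet_singleton a),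
    Measure.restrict_apply (hπ (measurableSet_singleton a)), Set.inter_comm, measureReal_def]

end MeasureFacts

lemma condExp_ae_le_of_forall_setIntegral_le {Ω : Type*} {m m₀ : MeasurableSpace Ω}
    {μ : Measure Ω} [IsFiniteMeasure μ] (hm : m ≤ m₀) {f g : Ω → ℝ} (hf : Integrable f μ)
    (hg : Integrable g μ) (hgm : StronglyMeasurable[m] g)
    (hfg : ∀ A, MeasurableSet[m] A → ∫ ω in A, f ω ∂μ ≤ ∫ ω in A, g ω ∂μ) :
    μ[f|m] ≤ᵐ[μ] g := by
  refine ae_of_ae_trim hm (ae_le_of_forall_setIntegral_le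
    (integrable_condExp.trim hm stronglyMeasurable_condExp) (hg.trim hm hgm) fun A hA _ => ?_)
  rw [← setIntegral_trim hm stronglyMeasurable_condExp hA, ← setIntegral_trim hm hgm hA,
    setIntegral_condExp hm hf hA]
  exact hfg A hA

lemma comap_comp_le_of_measurable {X α γ : Type*} [MeasurableSpace X] [MeasurableSpace α]
    [Countable α] [MeasurableSingletonClass α] {f : X → α} (hf : Measurable f) (h : α → γ) :
    MeasurableSpace.comap (h ∘ f) ⊤ ≤ ‹MeasurableSpace X› := by
  rintro _ ⟨U, -, rfl⟩
  exact hf (Set.to_countable (h ⁻¹' U)).measurableSet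

section Sublevel

variable {ι Ω : Type*} [Fintype ι] {T : ι → Ω → ℝ}

def censor (x : ι → ℝ) (t : ℝ) : ι → ℝ := fun k => max (x k) t

noncomputable def sublevel (x : ι → ℝ) (u : ℝ) : Finset ι := {k | x k ≤ u}

@[simp] lemma mem_sublevel {x : ι → ℝ} {u : ℝ} {k : ι} : k ∈ sublevel x u ↔ x k ≤ u := by
  simp [sublevel]

lemma sublevel_mono (x : ι → ℝ) {s t : ℝ} (hst : s ≤ t) : sublevel x s ⊆ sublevel x t :=
  fun _ hk => mem_sublevel.2 ((mem_sublevel.1 hk).trans hst)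

lemma sublevel_censor (x : ι → ℝ) {t u : ℝ} (htu : t ≤ u) :
    sublevel (censor x t) u = sublevel x u := by
  ext k
  simp [censor, htu]

lemma sublevel_eq_iff {x : ι → ℝ} {u : ℝ} {D : Finset ι} :
    sublevel x u = D ↔ ∀ k, x k ≤ u ↔ k ∈ D := by
  simp [Finset.ext_iff]

lemma censor_eq_piecewise [DecidableEq ι] {x : ι → ℝ} {t : ℝ} {D : Finset ι}
    (h : sublevel x t = D) : censor x t = D.piecewise (fun _ => t) x := by
  ext k
  by_cases hk : x k ≤ t
  · simp [censor, ← h, hk]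
  · simp [censor, ← h, hk, (not_le.1 hk).le]

def cell (T : ι → Ω → ℝ) (B : Set (ι → ℝ)) (s t : ℝ) (D E : Finset ι) : Set Ω :=
  {ω | censor (fun k => T k ω) t ∈ B ∧ sublevel (fun k => T k ω) t = D ∧
    sublevel (fun k => T k ω) s = E}

lemma mem_cell_iff [DecidableEq ι] {B : Set (ι → ℝ)} {s t : ℝ} (hst : s ≤ t) {D E : Finset ι}
    (hED : E ⊆ D) (ω : Ω) :
    ω ∈ cell T B s t D E ↔
      D.piecewise (fun _ => t) (fun k => T k ω) ∈ B ∩ {k | k ∉ D}.pi (fun _ => Set.Ioi t) ∧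
        ∀ k ∈ D, T k ω ∈ (if k ∈ E then Set.Iic s else Set.Ioc s t) := by
  constructor
  · rintro ⟨hB, hD, hE⟩
    rw [← censor_eq_piecewise hD]
    rw [sublevel_eq_iff] at hD hE
    refine ⟨⟨hB, fun k hk => ?_⟩, fun k hk => ?_⟩
    · simpa [censor] using not_le.1 (mt (hD k).1 hk)
    · split_ifs with hkE
      · exact (hE k).2 hkE
      · exact ⟨not_le.1 (mt (hE k).1 hkE), (hD k).2 hk⟩
  · rintro ⟨⟨hB, hout⟩, hin⟩
    have hD : sublevel (fun k => T k ω) t = D := by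
      refine sublevel_eq_iff.2 fun k => ⟨fun hk => ?_, fun hk => ?_⟩
      · by_contra hkD
        have := hout k hkD
        simp only [Finset.piecewise_eq_of_notMem _ _ _ hkD, Set.mem_Ioi] at this
        linarith
      · have := hin k hk
        split_ifs at this
        exacts [this.trans hst, this.2]
    refine ⟨censor_eq_piecewise hD ▸ hB, hD,
      sublevel_eq_iff.2 fun k => ⟨fun hks => ?_, fun hkE => ?_⟩⟩
    · by_contra hkE
      have := hin k ((sublevel_eq_iff.1 hD k).1 (hks.trans hst))
      rw [if_neg hkE] at this
      linarith [this.1]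
    · simpa [hkE] using hin k (hED hkE)

variable [MeasurableSpace Ω]

lemma measurable_sublevel (hT : ∀ k, Measurable (T k)) (u : ℝ) :
    Measurable fun ω => sublevel (fun k => T k ω) u :=
  measurable_finset_iff.2 fun k => by
    simpa using measurableSet_setOfPred.1 (hT k measurableSet_Iic)

lemma integrable_comp_sublevel {μ : Measure Ω} [IsFiniteMeasure μ] (hT : ∀ k, Measurable (T k))
    (h : Finset ι → ℝ) (u : ℝ) : Integrable (fun ω => h (sublevel (fun k => T k ω) u)) μ :=
  Integrable.of_finite.comp_measurable (measurable_sublevel hT u)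

end Sublevel

section CensoredIntegral

variable {ι Ω : Type*} [Fintype ι] [DecidableEq ι] [MeasurableSpace Ω] {μ : Measure Ω}
  [IsFiniteMeasure μ] {T : ι → Ω → ℝ} {N C : Finset ι} {s t p : ℝ}

lemma measureReal_cell (hindep : iIndepFun T μ) (hT : ∀ k, Measurable (T k))
    {B : Set (ι → ℝ)} (hB : MeasurableSet B) (hst : s ≤ t) (D E : Finset ι) :
    μ.real (cell T B s t D E) = if E ⊆ D then
      μ.real {ω | D.piecewise (fun _ => t) (fun k => T k ω) ∈ B ∩ {k | k ∉ D}.pi fun _ => Set.Ioi t}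
        * splitWeight (fun k => cdf' μ (T k) s) (fun k => cdf' μ (T k) t) D E
    else 0 := by
  split_ifs with hED
  · let S : ι → Set ℝ := fun k => if k ∈ E then Set.Iic s else Set.Ioc s t
    have hS : ∀ k, MeasurableSet (S k) := fun k => by
      by_cases hk : k ∈ E <;> simp [S, hk, measurableSet_Iic, measurableSet_Ioc]
    have hcell : cell T B s t D E = {ω | D.piecewise (fun _ => t) (fun k => T k ω) ∈
        B ∩ {k | k ∉ D}.pi fun _ => Set.Ioi t} ∩ ⋂ k ∈ D, T k ⁻¹' S k := by
      ext ω
      rw [mem_cell_iff hst hED]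
      simp [S]
    have hP : MeasurableSet (B ∩ {k | k ∉ D}.pi fun _ => Set.Ioi t) :=
      hB.inter (MeasurableSet.pi ((Set.toFinite _).countable) fun _ _ => measurableSet_Ioi)
    rw [hcell, measureReal_def, hindep.measure_piecewise_preimage_inter_biInter hT D _ hP hS,
      ENNReal.toReal_mul, ENNReal.toReal_prod, ← measureReal_def, splitWeight,
      ← prod_filter_mul_prod_filter_not D (· ∈ E), filter_mem_eq_inter, inter_eq_right.2 hED,
      ← sdiff_eq_filter]
    congr 2
    · exact prod_congr rfl fun k hk => by simp only [S, hk, if_true]; rfl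
    · refine prod_congr rfl fun k hk => ?_
      rw [← measureReal_def, ← measureReal_preimage_Ioc (hT k) hst]
      simp [S, (mem_sdiff.1 hk).2]
  · have hempty : cell T B s t D E = ∅ :=
      Set.eq_empty_of_forall_notMem fun ω ⟨_, hD, hE⟩ => hED (hE ▸ hD ▸ sublevel_mono _ hst)
    rw [hempty, measureReal_empty]

lemma sum_countRatio_mul_measureReal_cell_le (hindep : iIndepFun T μ)
    (hT : ∀ k, Measurable (T k)) (hNC : Disjoint N C) (hst : s ≤ t) (hp : 0 ≤ p)
    (hN : ∀ i ∈ N, cdf' μ (T i) s ≤ p * cdf' μ (T i) t)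
    (hC : ∀ j ∈ C, p * cdf' μ (T j) t ≤ cdf' μ (T j) s)
    {B : Set (ι → ℝ)} (hB : MeasurableSet B) (D : Finset ι) :
    ∑ E, countRatio N C E * μ.real (cell T B s t D E)
      ≤ ∑ E, countRatio N C D * (1 - (1 - p) ^ (#(D ∩ C) + 1)) * μ.real (cell T B s t D E) := by
  set q := fun k => cdf' μ (T k) s
  set w := fun k => cdf' μ (T k) t
  set o := μ.real {ω | D.piecewise (fun _ => t) (fun k => T k ω) ∈
    B ∩ {k | k ∉ D}.pi fun _ => Set.Ioi t}
  have hpowerset : ({E | E ⊆ D} : Finset (Finset ι)) = D.powerset := by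
    ext E
    simp
  simp only [measureReal_cell hindep hT hB hst, mul_ite, mul_zero]
  rw [← sum_filter, ← sum_filter, hpowerset]
  calc ∑ E ∈ D.powerset, countRatio N C E * (o * splitWeight q w D E)
      = o * ∑ E ∈ D.powerset, countRatio N C E * splitWeight q w D E := by
        rw [mul_sum]
        exact sum_congr rfl fun E _ => by ring
    _ ≤ o * (countRatio N C D * (1 - (1 - p) ^ (#(D ∩ C) + 1)) * ∏ k ∈ D, w k) :=
        mul_le_mul_of_nonneg_left (sum_powerset_countRatio_mul_splitWeight_le hNC
          (fun k => cdf'_nonneg μ _ s) (fun k => cdf'_mono μ _ hst) hp hN hC D) measureReal_nonneg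
    _ = ∑ E ∈ D.powerset, countRatio N C D * (1 - (1 - p) ^ (#(D ∩ C) + 1))
          * (o * splitWeight q w D E) := by
        rw [← sum_powerset_splitWeight q w, mul_sum, mul_sum]
        exact sum_congr rfl fun E _ => by ring

theorem setIntegral_countRatio_sublevel_le (hindep : iIndepFun T μ)
    (hT : ∀ k, Measurable (T k)) (hNC : Disjoint N C) (hst : s ≤ t) (hp : 0 ≤ p)
    (hN : ∀ i ∈ N, cdf' μ (T i) s ≤ p * cdf' μ (T i) t)
    (hC : ∀ j ∈ C, p * cdf' μ (T j) t ≤ cdf' μ (T j) s)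
    {B : Set (ι → ℝ)} (hB : MeasurableSet B) :
    ∫ ω in {ω | censor (fun k => T k ω) t ∈ B}, countRatio N C (sublevel (fun k => T k ω) s) ∂μ
      ≤ ∫ ω in {ω | censor (fun k => T k ω) t ∈ B},
          countRatio N C (sublevel (fun k => T k ω) t)
            * (1 - (1 - p) ^ (#(sublevel (fun k => T k ω) t ∩ C) + 1)) ∂μ := by
  set A := {ω | censor (fun k => T k ω) t ∈ B}
  let π := fun ω => (sublevel (fun k => T k ω) t, sublevel (fun k => T k ω) s)
  have hπ : Measurable π := (measurable_sublevel hT t).prodMk (measurable_sublevel hT s)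
  have hcell : ∀ D E, A ∩ π ⁻¹' {(D, E)} = cell T B s t D E := fun D E => by
    ext ω
    simp [A, π, cell]
  calc ∫ ω in A, countRatio N C (sublevel (fun k => T k ω) s) ∂μ
      = ∑ D, ∑ E, countRatio N C E * μ.real (cell T B s t D E) := by
        rw [setIntegral_comp_eq_sum hπ (fun a => countRatio N C a.2), Fintype.sum_prod_type]
        simp only [hcell]
    _ ≤ ∑ D, ∑ E, countRatio N C D * (1 - (1 - p) ^ (#(D ∩ C) + 1))
          * μ.real (cell T B s t D E) :=
        sum_le_sum fun D _ =>
          sum_countRatio_mul_measureReal_cell_le hindep hT hNC hst hp hN hC hB D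
    _ = _ := by
        rw [setIntegral_comp_eq_sum hπ
          (fun a => countRatio N C a.1 * (1 - (1 - p) ^ (#(a.1 ∩ C) + 1))), Fintype.sum_prod_type]
        simp only [hcell]

end CensoredIntegral

section Counts

variable {Ω : Type*} {n m : ℕ} {T : Fin (n + m) → Ω → ℝ} {I₀ : Set (Fin n)}

open scoped Classical in
noncomputable def nullIdx (m : ℕ) (I₀ : Set (Fin n)) : Finset (Fin (n + m)) :=
  ({i | i ∈ I₀} : Finset (Fin n)).map (Fin.castAddEmb m)

open scoped Classical in
noncomputable def nonNullIdx (m : ℕ) (I₀ : Set (Fin n)) : Finset (Fin (n + m)) :=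
  ({i | i ∉ I₀} : Finset (Fin n)).map (Fin.castAddEmb m)

def ctrlIdx (n m : ℕ) : Finset (Fin (n + m)) :=
  univ.map (Fin.natAddEmb n)

lemma disjoint_nullIdx_ctrlIdx : Disjoint (nullIdx m I₀) (ctrlIdx n m) := by
  simp only [nullIdx, ctrlIdx, disjoint_left, mem_map, Fin.coe_castAddEmb, Fin.natAddEmb_apply,
    mem_univ, true_and]
  rintro _ ⟨i, -, rfl⟩ ⟨j, hj⟩
  have := congrArg Fin.val hj
  simp only [Fin.val_natAdd, Fin.val_castAdd] at this
  omega

lemma forall_mem_nullIdx {P : Fin (n + m) → Prop} :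
    (∀ k ∈ nullIdx m I₀, P k) ↔ ∀ i ∈ I₀, P (Fin.castAdd m i) := by
  simp [nullIdx]

lemma forall_mem_ctrlIdx {P : Fin (n + m) → Prop} :
    (∀ k ∈ ctrlIdx n m, P k) ↔ ∀ j : Fin m, P (Fin.natAdd n j) := by
  simp [ctrlIdx]

lemma ncard_setOf_mem_and_le {α β : Type*} [Fintype β] [DecidableEq β] (e : α ↪ β)
    (s : Finset α) (x : β → ℝ) (u : ℝ) :
    {a | a ∈ s ∧ x (e a) ≤ u}.ncard = #(sublevel x u ∩ s.map e) := by
  have hset : {a | a ∈ s ∧ x (e a) ≤ u} = ↑(s.filter fun a => x (e a) ≤ u) := by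
    ext
    simp
  rw [hset, Set.ncard_coe_finset, ← card_map e]
  congr 1
  ext b
  simp only [mem_map, mem_filter, mem_inter, mem_sublevel]
  constructor
  · rintro ⟨a, ⟨ha, hx⟩, rfl⟩
    exact ⟨hx, a, ha, rfl⟩
  · rintro ⟨hx, a, ha, rfl⟩
    exact ⟨a, ⟨ha, hx⟩, rfl⟩

lemma Vcount_eq_card (ω : Ω) (u : ℝ) :
    Vcount n m T I₀ ω u = #(sublevel (fun k => T k ω) u ∩ nullIdx m I₀) := by
  rw [Vcount, nullIdx, ← ncard_setOf_mem_and_le]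
  simp

lemma Scount_eq_card (ω : Ω) (u : ℝ) :
    Scount n m T I₀ ω u = #(sublevel (fun k => T k ω) u ∩ nonNullIdx m I₀) := by
  rw [Scount, nonNullIdx, ← ncard_setOf_mem_and_le]
  simp

lemma VncCount_eq_card (ω : Ω) (u : ℝ) :
    VncCount n m T ω u = #(sublevel (fun k => T k ω) u ∩ ctrlIdx n m) := by
  rw [VncCount, ctrlIdx, ← ncard_setOf_mem_and_le]
  simp

lemma Mproc_nonneg (u : ℝ) (ω : Ω) : 0 ≤ Mproc n m T I₀ u ω := by
  unfold Mproc
  positivity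

lemma Mproc_eq (u : ℝ) (ω : Ω) :
    Mproc n m T I₀ u ω
      = (1 + m) * countRatio (nullIdx m I₀) (ctrlIdx n m) (sublevel (fun k => T k ω) u) := by
  rw [Mproc, Vcount_eq_card, VncCount_eq_card, countRatio]
  ring

end Counts

section BackFiltration

variable {Ω : Type*} {n m : ℕ} {T : Fin (n + m) → Ω → ℝ} {I₀ : Set (Fin n)}

noncomputable def countTriple (m : ℕ) (I₀ : Set (Fin n)) (D : Finset (Fin (n + m))) :
    ℕ × ℕ × ℕ :=
  (#(D ∩ nullIdx m I₀), #(D ∩ nonNullIdx m I₀), #(D ∩ ctrlIdx n m))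

lemma counts_eq_countTriple (u : ℝ) :
    (fun ω => (Vcount n m T I₀ ω u, Scount n m T I₀ ω u, VncCount n m T ω u))
      = countTriple m I₀ ∘ fun ω => sublevel (fun k => T k ω) u := by
  funext ω
  simp only [Function.comp_apply, countTriple, Vcount_eq_card, Scount_eq_card, VncCount_eq_card]

/-- Every count at a level `u ≥ t` can be read off the statistics censored at `t`. -/
lemma backFiltration_le_comap_censor (t : ℝ) :
    backFiltration n m T I₀ t
      ≤ MeasurableSpace.comap (fun ω => censor (fun k => T k ω) t) inferInstance := by
  refine iSup₂_le fun u hu => ?_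
  have hcensor : (fun ω => (Vcount n m T I₀ ω u, Scount n m T I₀ ω u, VncCount n m T ω u))
      = (countTriple m I₀ ∘ fun x => sublevel x u) ∘ fun ω => censor (fun k => T k ω) t := by
    rw [counts_eq_countTriple]
    funext ω
    simp only [Function.comp_apply, sublevel_censor _ hu.1]
  rw [hcensor, ← MeasurableSpace.comap_comp]
  exact MeasurableSpace.comap_mono (comap_comp_le_of_measurable
    (measurable_sublevel (T := fun k (x : Fin (n + m) → ℝ) => x k) measurable_pi_apply u) _)

lemma measurable_comp_counts_backFiltration (h : ℕ × ℕ × ℕ → ℝ) {t : ℝ} (ht : t ≤ 1) :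
    Measurable[backFiltration n m T I₀ t]
      fun ω => h (Vcount n m T I₀ ω t, Scount n m T I₀ ω t, VncCount n m T ω t) :=
  (measurable_from_top.comp (comap_measurable _)).mono
    (le_biSup (fun u => MeasurableSpace.comap
      (fun ω => (Vcount n m T I₀ ω u, Scount n m T I₀ ω u, VncCount n m T ω u)) ⊤)
      ⟨le_rfl, ht⟩) le_rfl

lemma backFiltration_le [MeasurableSpace Ω] (hT : ∀ k, Measurable (T k)) (t : ℝ) :
    backFiltration n m T I₀ t ≤ ‹MeasurableSpace Ω› :=
  iSup₂_le fun u _ => by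
    rw [counts_eq_countTriple]
    exact comap_comp_le_of_measurable (measurable_sublevel hT u) _

end BackFiltration

section Mproc

variable {Ω : Type*} [MeasurableSpace Ω] {μ : Measure Ω} [IsFiniteMeasure μ] {n m : ℕ}
  {T : Fin (n + m) → Ω → ℝ} {I₀ : Set (Fin n)}

lemma integrable_Mproc (hT : ∀ k, Measurable (T k)) (u : ℝ) :
    Integrable (Mproc n m T I₀ u) μ := by
  simp_rw [funext (Mproc_eq (T := T) (I₀ := I₀) u)]
  exact integrable_comp_sublevel hT (fun D => (1 + m) * countRatio _ _ D) u

lemma integrable_Mproc_mul (hT : ∀ k, Measurable (T k)) (u : ℝ) (c : ℕ → ℝ) :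
    Integrable (fun ω => Mproc n m T I₀ u ω * c (VncCount n m T ω u)) μ := by
  simp_rw [Mproc_eq, VncCount_eq_card]
  exact integrable_comp_sublevel hT
    (fun D => (1 + m) * countRatio (nullIdx m I₀) (ctrlIdx n m) D * c #(D ∩ ctrlIdx n m)) u

lemma setIntegral_Mproc_le (hindep : iIndepFun T μ) (hT : ∀ k, Measurable (T k)) {s t p : ℝ}
    (hst : s ≤ t) (hp : 0 ≤ p)
    (hnull : ∀ i ∈ I₀, cdf' μ (T (Fin.castAdd m i)) s ≤ p * cdf' μ (T (Fin.castAdd m i)) t)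
    (hctrl : ∀ j : Fin m, p * cdf' μ (T (Fin.natAdd n j)) t ≤ cdf' μ (T (Fin.natAdd n j)) s)
    {B : Set (Fin (n + m) → ℝ)} (hB : MeasurableSet B) :
    ∫ ω in {ω | censor (fun k => T k ω) t ∈ B}, Mproc n m T I₀ s ω ∂μ
      ≤ ∫ ω in {ω | censor (fun k => T k ω) t ∈ B},
          Mproc n m T I₀ t ω * (1 - (1 - p) ^ (VncCount n m T ω t + 1)) ∂μ := by
  simp_rw [Mproc_eq, VncCount_eq_card, mul_assoc, integral_const_mul]
  exact mul_le_mul_of_nonneg_left (setIntegral_countRatio_sublevel_le hindep hT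
    disjoint_nullIdx_ctrlIdx hst hp (forall_mem_nullIdx.2 hnull) (forall_mem_ctrlIdx.2 hctrl) hB)
    (by positivity)

end Mproc

theorem stmt10_general {Ω : Type*} [MeasurableSpace Ω] (μ : Measure Ω) [IsProbabilityMeasure μ]
    (n m : ℕ) (T : Fin (n + m) → Ω → ℝ) (hmeas : ∀ k, Measurable (T k))
    (I₀ : Set (Fin n))
    (hindep : iIndepFun (m := fun _ : Fin (n + m) => (inferInstance : MeasurableSpace ℝ)) T μ) :
    ∀ s t : ℝ, 0 ≤ s → s ≤ t → t ≤ 1 →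
      ∀ p : ℝ, 0 ≤ p → p ≤ 1 →
        (∀ i ∈ I₀, cdf' μ (T (Fin.castAdd m i)) s ≤ p * cdf' μ (T (Fin.castAdd m i)) t) →
        (∀ j : Fin m, p * cdf' μ (T (Fin.natAdd n j)) t ≤ cdf' μ (T (Fin.natAdd n j)) s) →
        ∀ᵐ ω ∂μ,
          (μ[Mproc n m T I₀ s | backFiltration n m T I₀ t]) ω ≤
              Mproc n m T I₀ t ω * (1 - (1 - p) ^ (VncCount n m T ω t + 1)) ∧
            Mproc n m T I₀ t ω * (1 - (1 - p) ^ (VncCount n m T ω t + 1)) ≤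
              Mproc n m T I₀ t ω := by
  intro s t _ hst ht1 p hp0 hp1 hnull hctrl
  have hcondExp := condExp_ae_le_of_forall_setIntegral_le (backFiltration_le hmeas t)
    (integrable_Mproc hmeas s) (integrable_Mproc_mul hmeas t fun c => 1 - (1 - p) ^ (c + 1))
    (measurable_comp_counts_backFiltration
      (fun x => x.1 * (1 + m) / (1 + x.2.2) * (1 - (1 - p) ^ (x.2.2 + 1))) ht1).stronglyMeasurable
    fun A hA => by
      obtain ⟨B, hB, rfl⟩ := backFiltration_le_comap_censor t A hA
      exact setIntegral_Mproc_le hindep hmeas hst hp0 hnull hctrl hB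
  filter_upwards [hcondExp] with ω hω
  refine ⟨hω, mul_le_of_le_one_right (Mproc_nonneg t ω) ?_⟩
  linarith [pow_nonneg (by linarith : 0 ≤ 1 - p) (VncCount n m T ω t + 1)]

/-- under uniform stochastic dominance of the true nulls over the negative
controls and mutual independence (statistics in `(0,1)` with continuous CDFs), the
process `M(t) = V(t)(1+m)/(1+V_nc(t))` is a backward super-martingale: for all
`0 ≤ s ≤ t ≤ 1` and any `0 ≤ p_t^s ≤ 1` with
`max_{i ∈ I₀} F_i(s)/F_i(t) ≤ p_t^s ≤ min_j F_j(s)/F_j(t)`, almost surely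
`E[M(s) | F_t] ≤ M(t)(1-(1-p_t^s)^{V_nc(t)+1}) ≤ M(t)`. -/
theorem stmt10 {Ω : Type*} [MeasurableSpace Ω] (μ : Measure Ω) [IsProbabilityMeasure μ]
    (n m : ℕ) (T : Fin (n + m) → Ω → ℝ) (hmeas : ∀ k, Measurable (T k))
    (hcont : ∀ k, ContinuousCDF μ (T k))
    (hrange : ∀ k, ∀ ω, T k ω ∈ Set.Ioo (0 : ℝ) 1)
    (I₀ : Set (Fin n))
    (hdom : ∀ i ∈ I₀, ∀ j : Fin m,
      UnifStochLarger μ (T (Fin.castAdd m i)) (T (Fin.natAdd n j)))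
    (hindep : iIndepFun (m := fun _ : Fin (n + m) => (inferInstance : MeasurableSpace ℝ)) T μ) :
    ∀ s t : ℝ, 0 ≤ s → s ≤ t → t ≤ 1 →
      ∀ p : ℝ, 0 ≤ p → p ≤ 1 →
        (∀ i ∈ I₀, cdf' μ (T (Fin.castAdd m i)) s ≤ p * cdf' μ (T (Fin.castAdd m i)) t) →
        (∀ j : Fin m, p * cdf' μ (T (Fin.natAdd n j)) t ≤ cdf' μ (T (Fin.natAdd n j)) s) →
        ∀ᵐ ω ∂μ,
          (μ[Mproc n m T I₀ s | backFiltration n m T I₀ t]) ω ≤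
              Mproc n m T I₀ t ω * (1 - (1 - p) ^ (VncCount n m T ω t + 1)) ∧
            Mproc n m T I₀ t ω * (1 - (1 - p) ^ (VncCount n m T ω t + 1)) ≤
              Mproc n m T I₀ t ω :=
  stmt10_general μ n m T hmeas I₀ hindep
end

section
/- Let F̂_n be the empirical CDF of n i.i.d. samples from a CDF F with density f satisfying f(t) ≤ f_max for |t − τ*| ≤ D. Then there exists a universal constant C > 0 such that for all 0 < δ ≤ D and n ≥ 5: E[ sup over |t − τ*| ≤ δ of |(F̂_n(t) − F(t)) − (F̂_n(τ*) − F(τ*))| ] ≤ C( √(δ·f_max·log n / n) + log n / n ). -/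
open MeasureTheory ProbabilityTheory
open scoped ENNReal

noncomputable def empCDF {Ω : Type*} (Y : ℕ → Ω → ℝ) (n : ℕ) (ω : Ω) (t : ℝ) : ℝ :=
  (({i : ℕ | i < n ∧ Y i ω ≤ t} : Set ℕ).ncard : ℝ) / n

/-!
Both `F̂ₙ` and `F` are monotone, so on a grid of mesh `δ / n` covering `[τ* - δ, τ* + δ]` the
supremum is at most the maximum over the `2n + 1` grid points plus `f_max δ / n`, the growth of
`F` over one cell. At a grid point `t`, `n` times the increment is the sum of `n` i.i.d. centred
copies of `X = 𝟙{Y ≤ t} - 𝟙{Y ≤ τ*}`. Since `|X| ≤ 1` and `X` has the sign of `t - τ*`,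
`E X² ≤ E |X| = |F t - F τ*| ≤ f_max δ`, and Bernstein's bound `e^y ≤ 1 + y + y²` (`|y| ≤ 1`)
gives the exponential moments `exp (n f_max δ s²)` for `|s| ≤ 1`. The exponential-moment maximal
inequality over the grid, with `s` optimised in `(0, 1]`, bounds the expected maximum by
`2 √(n f_max δ log (4n + 2)) + 2 log (4n + 2)`. When `δ f_max log n / n > 1` the trivial bound `2`
suffices.
-/

open Real Finset

section Concentration

variable {Ω : Type*} [MeasurableSpace Ω] {μ : Measure Ω} [IsProbabilityMeasure μ]

lemma mgf_sub_integral_le {X : Ω → ℝ} (hX : Measurable X) (hX1 : ∀ ω, |X ω| ≤ 1)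
    {t : ℝ} (ht : |t| ≤ 1) :
    mgf (fun ω => X ω - μ[X]) μ t ≤ exp (t ^ 2 * μ[fun ω => |X ω|]) := by
  have hXint : Integrable X μ :=
    .of_bound hX.aestronglyMeasurable 1 (.of_forall fun ω => (norm_eq_abs _).trans_le (hX1 ω))
  have hpt : ∀ ω, exp (t * X ω) ≤ 1 + t * X ω + t ^ 2 * |X ω| := fun ω => by
    have htX : |t * X ω| ≤ 1 := by
      rw [abs_mul]; exact mul_le_one₀ ht (abs_nonneg _) (hX1 ω)
    have hsq : (t * X ω) ^ 2 ≤ t ^ 2 * |X ω| := by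
      rw [mul_pow, ← sq_abs (X ω)]
      exact mul_le_mul_of_nonneg_left (pow_le_of_le_one (abs_nonneg _) (hX1 ω) two_ne_zero)
        (sq_nonneg t)
    linarith [(abs_le.mp (abs_exp_sub_one_sub_id_le htX)).2]
  have hlin : Integrable (fun ω => 1 + t * X ω) μ := (integrable_const 1).add (hXint.const_mul t)
  have hmgf : mgf X μ t ≤ 1 + t * μ[X] + t ^ 2 * μ[fun ω => |X ω|] :=
    calc mgf X μ t ≤ ∫ ω, (1 + t * X ω + t ^ 2 * |X ω|) ∂μ :=
          integral_mono_of_nonneg (.of_forall fun ω => (exp_pos _).le)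
            (hlin.add (hXint.abs.const_mul _)) (.of_forall hpt)
      _ = 1 + t * μ[X] + t ^ 2 * μ[fun ω => |X ω|] := by
          rw [integral_add hlin (hXint.abs.const_mul _),
            integral_add (integrable_const 1) (hXint.const_mul t), integral_const_mul,
            integral_const_mul]
          simp
  calc mgf (fun ω => X ω - μ[X]) μ t = mgf X μ t * exp (-(t * μ[X])) := by
        simp_rw [sub_eq_add_neg, mgf_add_const, mul_neg]
    _ ≤ exp (t * μ[X] + t ^ 2 * μ[fun ω => |X ω|]) * exp (-(t * μ[X])) := by
        gcongr
        linarith [add_one_le_exp (t * μ[X] + t ^ 2 * μ[fun ω => |X ω|])]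
    _ = exp (t ^ 2 * μ[fun ω => |X ω|]) := by rw [← exp_add]; ring_nf

lemma ProbabilityTheory.iIndepFun.mgf_sum_sub_integral_le {ι : Type*} {X : ι → Ω → ℝ}
    (hindep : iIndepFun X μ) (hX : ∀ i, Measurable (X i)) (hX1 : ∀ i ω, |X i ω| ≤ 1)
    (s : Finset ι) {t : ℝ} (ht : |t| ≤ 1) :
    mgf (fun ω => ∑ i ∈ s, (X i ω - μ[X i])) μ t ≤
      exp (t ^ 2 * ∑ i ∈ s, μ[fun ω => |X i ω|]) := by
  have hcentred : iIndepFun (fun i ω => X i ω - μ[X i]) μ :=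
    (hindep.comp (fun i (y : ℝ) => y - μ[X i]) fun _ => measurable_id.sub_const _ :)
  have hsum : (fun ω => ∑ i ∈ s, (X i ω - μ[X i])) = ∑ i ∈ s, fun ω => X i ω - μ[X i] := by
    ext ω; simp
  rw [hsum, hcentred.mgf_sum (fun i => (hX i).sub_const _), mul_sum, exp_sum]
  exact prod_le_prod (fun i _ => mgf_nonneg) fun i _ => mgf_sub_integral_le (hX i) (hX1 i) ht

lemma exp_mul_sup'_abs_le_sum {ι : Type*} {s : Finset ι} (hs : s.Nonempty) (x : ι → ℝ)
    (c : ℝ) : exp (c * s.sup' hs fun k => |x k|) ≤ ∑ k ∈ s, (exp (c * x k) + exp (-c * x k)) := by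
  obtain ⟨k, hk, hmax⟩ := exists_mem_eq_sup' hs fun k => |x k|
  have hexp_abs : exp (c * |x k|) ≤ exp (c * x k) + exp (-c * x k) := by
    rcases abs_choice (x k) with h | h <;> rw [h]
    · linarith [exp_pos (-c * x k)]
    · rw [mul_neg, ← neg_mul]; linarith [exp_pos (c * x k)]
  rw [hmax]
  exact hexp_abs.trans (single_le_sum (f := fun k => exp (c * x k) + exp (-c * x k))
    (fun _ _ => by positivity) hk)

lemma integrable_exp_mul_of_abs_le {W : Ω → ℝ} (hW : Measurable W) {B : ℝ}
    (hWB : ∀ ω, |W ω| ≤ B) (a : ℝ) : Integrable (fun ω => exp (a * W ω)) μ :=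
  .of_bound (hW.const_mul a).exp.aestronglyMeasurable (exp (|a| * B)) (.of_forall fun ω => by
    rw [norm_of_nonneg (exp_pos _).le, exp_le_exp]
    calc a * W ω ≤ |a| * |W ω| := (le_abs_self _).trans (abs_mul a (W ω)).le
      _ ≤ |a| * B := mul_le_mul_of_nonneg_left (hWB ω) (abs_nonneg a))

variable {ι : Type*} {s : Finset ι} {V : ι → Ω → ℝ}

lemma integrable_sup'_abs (hs : s.Nonempty) (hV : ∀ k, Measurable (V k)) {B : ℝ}
    (hVB : ∀ k ω, |V k ω| ≤ B) : Integrable (fun ω => s.sup' hs fun k => |V k ω|) μ := by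
  have hm : Measurable fun ω => s.sup' hs fun k => |V k ω| := by
    convert Finset.measurable_sup' hs fun k _ => (hV k).abs using 1
    ext ω; simp only [Finset.sup'_apply]
  refine .of_bound hm.aestronglyMeasurable B (.of_forall fun ω => ?_)
  rw [norm_of_nonneg ((abs_nonneg _).trans (le_sup' (fun k => |V k ω|) hs.choose_spec))]
  exact sup'_le _ _ fun k _ => hVB k ω

lemma mul_integral_sup'_abs_le (hs : s.Nonempty) (hV : ∀ k, Measurable (V k)) {B : ℝ}
    (hVB : ∀ k ω, |V k ω| ≤ B) {c K : ℝ} (hpos : ∀ k ∈ s, mgf (V k) μ c ≤ exp K)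
    (hneg : ∀ k ∈ s, mgf (V k) μ (-c) ≤ exp K) :
    c * ∫ ω, s.sup' hs (fun k => |V k ω|) ∂μ ≤ log (2 * #s) + K := by
  have hexp_int : ∀ a k, Integrable (fun ω => exp (a * V k ω)) μ := fun a k =>
    integrable_exp_mul_of_abs_le (hV k) (hVB k) a
  have hint : ∀ k, Integrable (fun ω => exp (c * V k ω) + exp (-c * V k ω)) μ := fun k =>
    (hexp_int c k).add (hexp_int (-c) k)
  set N : Ω → ℝ := fun ω => s.sup' hs fun k => |V k ω|
  have hNint : Integrable N μ := integrable_sup'_abs hs hV hVB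
  have hsum_int : Integrable (fun ω => ∑ k ∈ s, (exp (c * V k ω) + exp (-c * V k ω))) μ :=
    integrable_finsetSum s fun k _ => hint k
  have hdom : ∀ ω, exp (c * N ω) ≤ ∑ k ∈ s, (exp (c * V k ω) + exp (-c * V k ω)) := fun ω =>
    exp_mul_sup'_abs_le_sum hs (fun k => V k ω) c
  have hjensen : exp (c * ∫ ω, N ω ∂μ) ≤ ∫ ω, exp (c * N ω) ∂μ := by
    rw [← integral_const_mul]
    exact convexOn_exp.map_integral_le continuous_exp.continuousOn isClosed_univ
      (.of_forall fun _ => trivial) (hNint.const_mul c)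
      (hsum_int.mono' (continuous_exp.comp_aestronglyMeasurable
        (hNint.aestronglyMeasurable.const_mul c))
        (.of_forall fun ω => (norm_of_nonneg (exp_pos _).le).trans_le (hdom ω)))
  have hsum : ∫ ω, exp (c * N ω) ∂μ ≤ 2 * #s * exp K :=
    calc ∫ ω, exp (c * N ω) ∂μ
        ≤ ∫ ω, ∑ k ∈ s, (exp (c * V k ω) + exp (-c * V k ω)) ∂μ :=
          integral_mono_of_nonneg (.of_forall fun _ => (exp_pos _).le) hsum_int (.of_forall hdom)
      _ = ∑ k ∈ s, (mgf (V k) μ c + mgf (V k) μ (-c)) := by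
          rw [integral_finsetSum _ fun k _ => hint k]
          exact sum_congr rfl fun k _ => integral_add (hexp_int c k) (hexp_int (-c) k)
      _ ≤ ∑ _k ∈ s, (exp K + exp K) := sum_le_sum fun k hk => add_le_add (hpos k hk) (hneg k hk)
      _ = 2 * #s * exp K := by rw [sum_const, nsmul_eq_mul]; ring
  have hcard : (0 : ℝ) < 2 * #s := by have := hs.card_pos; positivity
  calc c * ∫ ω, N ω ∂μ ≤ log (2 * #s * exp K) :=
        (le_log_iff_exp_le (by positivity)).mpr (hjensen.trans hsum)
    _ = log (2 * #s) + K := by rw [log_mul hcard.ne' (exp_pos K).ne', log_exp]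

lemma integral_sup'_abs_le_of_mgf_le (hs : s.Nonempty) (hV : ∀ k, Measurable (V k)) {B : ℝ}
    (hVB : ∀ k ω, |V k ω| ≤ B) {A : ℝ}
    (hmgf : ∀ k ∈ s, ∀ t, |t| ≤ 1 → mgf (V k) μ t ≤ exp (A * t ^ 2)) :
    ∫ ω, s.sup' hs (fun k => |V k ω|) ∂μ ≤ 2 * √(A * log (2 * #s)) + 2 * log (2 * #s) := by
  set L := log (2 * #s)
  have hL : 0 < L := log_pos (by have := hs.card_pos; norm_cast; omega)
  have hbound := fun c (hc : |c| ≤ 1) => mul_integral_sup'_abs_le hs hV hVB (K := A * c ^ 2)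
    (fun k hk => hmgf k hk c hc) (fun k hk => by simpa using hmgf k hk (-c) (by simpa using hc))
  -- `c = min 1 √(L / A)` balances `L / c` against `A c`.
  rcases le_or_gt A L with hAL | hLA
  · have := hbound 1 (by simp)
    linarith [sqrt_nonneg (A * L)]
  · have hA0 : 0 < A := hL.trans hLA
    set c := √(L / A)
    have hc : 0 < c := sqrt_pos.mpr (div_pos hL hA0)
    have hc1 : |c| ≤ 1 := by
      rw [abs_of_pos hc]; exact sqrt_le_one.mpr ((div_le_one hA0).mpr hLA.le)
    have hAc : A * c ^ 2 = L := by
      rw [sq_sqrt (div_pos hL hA0).le]; field_simp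
    have hcL : c * √(A * L) = L := by
      rw [← sqrt_mul (div_pos hL hA0).le, show L / A * (A * L) = L ^ 2 by field_simp,
        sqrt_sq hL.le]
    have := hbound c hc1
    rw [hAc] at this
    nlinarith

end Concentration

lemma exists_add_mul_le_le_add_succ_mul {a h t : ℝ} (hh : 0 < h) {m : ℕ} (hm : m ≠ 0)
    (ht : t ∈ Set.Icc a (a + m * h)) : ∃ k < m, a + k * h ≤ t ∧ t ≤ a + (k + 1) * h := by
  set k := min ⌊(t - a) / h⌋₊ (m - 1)
  have hx : 0 ≤ (t - a) / h := div_nonneg (by linarith [ht.1]) hh.le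
  refine ⟨k, by omega, ?_, ?_⟩
  · have : (k : ℝ) ≤ (t - a) / h := (Nat.cast_le.mpr (min_le_left _ _)).trans (Nat.floor_le hx)
    rw [le_div_iff₀ hh] at this; linarith
  · rcases le_total ⌊(t - a) / h⌋₊ (m - 1) with hle | hle
    · have := Nat.lt_floor_add_one ((t - a) / h)
      rw [div_lt_iff₀ hh] at this
      simp only [k, min_eq_left hle]; linarith
    · have : ((m - 1 : ℕ) : ℝ) + 1 = m := by rw [Nat.cast_sub (by omega)]; push_cast; ring
      simp only [k, min_eq_right hle, this]; exact ht.2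

lemma abs_sub_sub_le_max_add {φ ψ : ℝ → ℝ} (hφ : Monotone φ) (hψ : Monotone ψ) (c : ℝ)
    {a t b : ℝ} (hat : a ≤ t) (htb : t ≤ b) :
    |φ t - ψ t - c| ≤ max |φ a - ψ a - c| |φ b - ψ b - c| + (ψ b - ψ a) := by
  have := hφ hat; have := hφ htb; have := hψ hat; have := hψ htb
  have := le_max_left |φ a - ψ a - c| |φ b - ψ b - c|
  have := le_max_right |φ a - ψ a - c| |φ b - ψ b - c|
  rw [abs_le]
  constructor <;> linarith [neg_abs_le (φ a - ψ a - c), le_abs_self (φ b - ψ b - c)]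

lemma abs_sub_sub_le_sup'_add {φ ψ : ℝ → ℝ} (hφ : Monotone φ) (hψ : Monotone ψ) (c : ℝ)
    {a h L : ℝ} (hh : 0 < h) {m : ℕ} (hm : m ≠ 0)
    (hψL : ∀ k < m, ψ (a + (k + 1) * h) - ψ (a + k * h) ≤ L * h)
    {t : ℝ} (ht : t ∈ Set.Icc a (a + m * h)) :
    |φ t - ψ t - c| ≤ (range (m + 1)).sup' nonempty_range_add_one
      (fun k => |φ (a + k * h) - ψ (a + k * h) - c|) + L * h := by
  obtain ⟨k, hk, hlo, hhi⟩ := exists_add_mul_le_le_add_succ_mul hh hm ht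
  have hgrid : ∀ j ≤ m, |φ (a + j * h) - ψ (a + j * h) - c| ≤ (range (m + 1)).sup'
      nonempty_range_add_one (fun k => |φ (a + k * h) - ψ (a + k * h) - c|) := fun j hj =>
    le_sup' (fun k : ℕ => |φ (a + k * h) - ψ (a + k * h) - c|) (mem_range_succ_iff.mpr hj)
  have hk1 := hgrid (k + 1) hk
  push_cast at hk1
  linarith [abs_sub_sub_le_max_add hφ hψ c hlo hhi, hψL k hk, max_le (hgrid k hk.le) hk1]

lemma sub_add_mul_div_mem_Icc {τ δ : ℝ} (hδ : 0 < δ) {n : ℕ} (hn : n ≠ 0) {k : ℕ}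
    (hk : k ≤ 2 * n) : τ - δ + k * (δ / n) ∈ Set.Icc (τ - δ) (τ + δ) := by
  have hnpos : (0 : ℝ) < n := by positivity
  have : (k : ℝ) * (δ / n) ≤ 2 * δ :=
    calc (k : ℝ) * (δ / n) ≤ (2 * n : ℕ) * (δ / n) := by gcongr
      _ = 2 * δ := by push_cast; field_simp
  constructor <;> nlinarith [div_pos hδ hnpos]

lemma abs_sub_le_of_forall_sub_le_mul {F : ℝ → ℝ} (hF : Monotone F) {τ δ L : ℝ} (hδ : 0 < δ)
    (hFL : ∀ a ∈ Set.Icc (τ - δ) (τ + δ), ∀ b ∈ Set.Icc (τ - δ) (τ + δ), a ≤ b →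
      F b - F a ≤ L * (b - a))
    {t : ℝ} (ht : t ∈ Set.Icc (τ - δ) (τ + δ)) : |F t - F τ| ≤ δ * L := by
  have hτ : τ ∈ Set.Icc (τ - δ) (τ + δ) := ⟨by linarith, by linarith⟩
  have hL : 0 ≤ L := by
    have := hFL τ hτ (τ + δ) ⟨by linarith, le_rfl⟩ (by linarith)
    nlinarith [hF (show τ ≤ τ + δ by linarith)]
  rcases le_total t τ with hle | hle
  · have := hFL t ht τ hτ hle
    rw [abs_sub_comm, abs_of_nonneg (sub_nonneg.mpr (hF hle))]; nlinarith [ht.1]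
  · have := hFL τ hτ t ht hle
    rw [abs_of_nonneg (sub_nonneg.mpr (hF hle))]; nlinarith [ht.2]

lemma log_two_mul_two_mul_add_one_le {x : ℝ} (hx : 5 ≤ x) :
    log (2 * (2 * x + 1)) ≤ 2 * log x :=
  calc log (2 * (2 * x + 1)) ≤ log (x ^ 2) := log_le_log (by positivity) (by nlinarith)
    _ = 2 * log x := by rw [log_pow]; push_cast; ring

lemma add_div_le_four_mul_sqrt_add_log_div {x Q : ℝ} (hx : 5 ≤ x) (hQ : Q * log x / x ≤ 1) :
    (2 * √(x * Q * log (2 * (2 * x + 1))) + 2 * log (2 * (2 * x + 1)) + Q) / x ≤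
      4 * (√(Q * log x / x) + log x / x) := by
  have hx0 : 0 < x := by linarith
  have hlog : 1 ≤ log x := by
    rw [le_log_iff_exp_le hx0]; linarith [exp_one_lt_d9]
  have hL := log_two_mul_two_mul_add_one_le hx
  set S := √(Q * log x / x)
  have hS0 : 0 ≤ S := sqrt_nonneg _
  rcases lt_or_ge Q 0 with hQneg | hQ0
  · have : x * Q * log (2 * (2 * x + 1)) ≤ 0 :=
      mul_nonpos_of_nonpos_of_nonneg (by nlinarith) (log_nonneg (by linarith))
    rw [sqrt_eq_zero'.mpr this, div_le_iff₀ hx0]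
    have : log x / x * x = log x := div_mul_cancel₀ _ hx0.ne'
    nlinarith [mul_nonneg hS0 hx0.le]
  have hsqrt : √(x * Q * log (2 * (2 * x + 1))) ≤ x * (√2 * S) :=
    calc √(x * Q * log (2 * (2 * x + 1))) ≤ √(x ^ 2 * (2 * (Q * log x / x))) := by
          apply sqrt_le_sqrt
          rw [show x ^ 2 * (2 * (Q * log x / x)) = x * Q * (2 * log x) by field_simp]
          gcongr
      _ = x * (√2 * S) := by rw [sqrt_mul (sq_nonneg x), sqrt_sq hx0.le, sqrt_mul zero_le_two]
  have hsqrt2 : √2 ≤ 3 / 2 := by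
    rw [sqrt_le_left (by norm_num)]; norm_num
  have hQS : Q / x ≤ S := by
    have hu : 0 ≤ Q * log x / x := by positivity
    calc Q / x ≤ Q * log x / x := by gcongr; nlinarith
      _ ≤ S := by rw [le_sqrt hu hu]; nlinarith
  have hlogL : 2 * log (2 * (2 * x + 1)) / x ≤ 4 * (log x / x) := by
    rw [← mul_div_assoc]; exact div_le_div_of_nonneg_right (by linarith) hx0.le
  have hsq : 2 * √(x * Q * log (2 * (2 * x + 1))) / x ≤ 3 * S := by
    rw [div_le_iff₀ hx0]
    nlinarith [mul_le_mul_of_nonneg_right hsqrt2 (mul_nonneg hx0.le hS0)]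
  rw [add_div, add_div]
  linarith

noncomputable def stepIncrement (τ t x : ℝ) : ℝ :=
  (Set.Iic t).indicator 1 x - (Set.Iic τ).indicator 1 x

lemma abs_stepIncrement_le_one (τ t x : ℝ) : |stepIncrement τ t x| ≤ 1 := by
  unfold stepIncrement
  by_cases ht : x ≤ t <;> by_cases hτ : x ≤ τ <;> simp [Set.indicator, ht, hτ]

lemma abs_stepIncrement (τ t x : ℝ) :
    |stepIncrement τ t x| = stepIncrement (min τ t) (max τ t) x := by
  unfold stepIncrement
  by_cases ht : x ≤ t <;> by_cases hτ : x ≤ τ <;> simp [Set.indicator, ht, hτ]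

lemma measurable_stepIncrement (τ t : ℝ) : Measurable (stepIncrement τ t) :=
  (measurable_const.indicator measurableSet_Iic).sub (measurable_const.indicator measurableSet_Iic)

lemma integral_stepIncrement (ν : Measure ℝ) [IsProbabilityMeasure ν] (τ t : ℝ) :
    ∫ x, stepIncrement τ t x ∂ν = cdf ν t - cdf ν τ := by
  unfold stepIncrement
  rw [integral_sub ((integrable_const 1).indicator measurableSet_Iic)
      ((integrable_const 1).indicator measurableSet_Iic),
    integral_indicator_one measurableSet_Iic, integral_indicator_one measurableSet_Iic,
    cdf_eq_real, cdf_eq_real]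

lemma integral_abs_stepIncrement (ν : Measure ℝ) [IsProbabilityMeasure ν] (τ t : ℝ) :
    ∫ x, |stepIncrement τ t x| ∂ν = |cdf ν t - cdf ν τ| := by
  simp_rw [abs_stepIncrement, integral_stepIncrement, (monotone_cdf ν).map_max,
    (monotone_cdf ν).map_min, max_sub_min_eq_abs]

section EmpiricalProcess

variable {Ω : Type*} {Y : ℕ → Ω → ℝ} {F : ℝ → ℝ}

lemma empCDF_eq_sum (Y : ℕ → Ω → ℝ) (n : ℕ) (ω : Ω) (t : ℝ) :
    empCDF Y n ω t = (∑ i ∈ range n, (Set.Iic t).indicator 1 (Y i ω)) / n := by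
  classical
  rw [empCDF, sum_indicator_eq_sum_filter]
  simp only [Pi.one_apply, sum_const, nsmul_eq_mul, mul_one]
  rw [← Set.ncard_coe_finset]
  congr
  ext i; simp

lemma monotone_empCDF (Y : ℕ → Ω → ℝ) (n : ℕ) (ω : Ω) : Monotone (empCDF Y n ω) := by
  intro s t hst
  rw [empCDF_eq_sum, empCDF_eq_sum]
  gcongr with i
  simp

lemma empCDF_mem_Icc (Y : ℕ → Ω → ℝ) (n : ℕ) (ω : Ω) (t : ℝ) :
    empCDF Y n ω t ∈ Set.Icc 0 1 := by
  have hind : ∀ i, (Set.Iic t).indicator (1 : ℝ → ℝ) (Y i ω) ∈ Set.Icc 0 1 := fun i => by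
    by_cases h : Y i ω ≤ t <;> simp [Set.indicator, h]
  rw [empCDF_eq_sum]
  refine ⟨div_nonneg (sum_nonneg fun i _ => (hind i).1) n.cast_nonneg,
    div_le_one_of_le₀ ?_ n.cast_nonneg⟩
  calc ∑ i ∈ range n, (Set.Iic t).indicator 1 (Y i ω) ≤ ∑ _i ∈ range n, (1 : ℝ) :=
        sum_le_sum fun i _ => (hind i).2
    _ = n := by simp

noncomputable def empIncrement (Y : ℕ → Ω → ℝ) (F : ℝ → ℝ) (n : ℕ) (τ : ℝ) (ω : Ω) (t : ℝ) :
    ℝ :=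
  (empCDF Y n ω t - F t) - (empCDF Y n ω τ - F τ)

lemma abs_empIncrement_le_two (hF : ∀ t, F t ∈ Set.Icc 0 1) (n : ℕ) (τ : ℝ) (ω : Ω) (t : ℝ) :
    |empIncrement Y F n τ ω t| ≤ 2 := by
  obtain ⟨h1, h2⟩ := empCDF_mem_Icc Y n ω t
  obtain ⟨h3, h4⟩ := empCDF_mem_Icc Y n ω τ
  obtain ⟨h5, h6⟩ := hF t
  obtain ⟨h7, h8⟩ := hF τ
  rw [empIncrement, abs_le]
  constructor <;> linarith

lemma abs_natCast_mul_empIncrement_le (hF : ∀ t, F t ∈ Set.Icc 0 1) (n : ℕ) (τ : ℝ) (ω : Ω)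
    (t : ℝ) : |n * empIncrement Y F n τ ω t| ≤ n * 2 := by
  rw [abs_mul, Nat.abs_cast]
  exact mul_le_mul_of_nonneg_left (abs_empIncrement_le_two hF n τ ω t) n.cast_nonneg

lemma natCast_mul_empIncrement {n : ℕ} (hn : n ≠ 0) (τ : ℝ) (ω : Ω) (t : ℝ) :
    n * empIncrement Y F n τ ω t = ∑ i ∈ range n, (stepIncrement τ t (Y i ω) - (F t - F τ)) := by
  rw [empIncrement, empCDF_eq_sum, empCDF_eq_sum, sum_sub_distrib, sum_const, card_range,
    nsmul_eq_mul]
  simp only [stepIncrement, sum_sub_distrib]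
  field_simp
  ring

lemma iSup_abs_empIncrement_le (hF : Monotone F) {τ δ L : ℝ} (hδ : 0 < δ)
    (hFL : ∀ a ∈ Set.Icc (τ - δ) (τ + δ), ∀ b ∈ Set.Icc (τ - δ) (τ + δ), a ≤ b →
      F b - F a ≤ L * (b - a))
    {n : ℕ} (hn : n ≠ 0) (ω : Ω) :
    ⨆ t : {t : ℝ // |t - τ| ≤ δ}, |empIncrement Y F n τ ω t| ≤
      (range (2 * n + 1)).sup' nonempty_range_add_one
        (fun k => |n * empIncrement Y F n τ ω (τ - δ + k * (δ / n))|) / n + δ * L / n := by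
  have hnpos : (0 : ℝ) < n := by positivity
  have hend : τ - δ + ((2 * n : ℕ) : ℝ) * (δ / n) = τ + δ := by field_simp; push_cast; ring
  have : Nonempty {t : ℝ // |t - τ| ≤ δ} := ⟨⟨τ, by simpa using hδ.le⟩⟩
  refine ciSup_le fun ⟨t, ht⟩ => ?_
  refine (abs_sub_sub_le_sup'_add (monotone_empCDF Y n ω) hF _ (a := τ - δ) (L := L)
    (div_pos hδ hnpos) (m := 2 * n) (by omega) (fun k hk => ?_) ?_).trans ?_
  · have := hFL _ (sub_add_mul_div_mem_Icc hδ hn hk.le) _ (sub_add_mul_div_mem_Icc hδ hn hk)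
      (by push_cast; nlinarith [div_pos hδ hnpos])
    push_cast at this ⊢
    linarith
  · rw [hend]; constructor <;> linarith [abs_le.mp ht]
  · rw [mul_div_assoc', mul_comm L δ]
    gcongr
    refine sup'_le _ _ fun k hk => (le_div_iff₀ hnpos).mpr ?_
    rw [mul_comm, ← Nat.abs_cast n, ← abs_mul, Nat.abs_cast]
    exact le_sup' (fun k : ℕ => |n * empIncrement Y F n τ ω (τ - δ + k * (δ / n))|) hk

variable [MeasurableSpace Ω] {μ : Measure Ω} [IsProbabilityMeasure μ]

lemma measurable_empCDF (hY : ∀ i, Measurable (Y i)) (n : ℕ) (t : ℝ) :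
    Measurable fun ω => empCDF Y n ω t := by
  simp_rw [empCDF_eq_sum]
  exact (Finset.measurable_sum _ fun i _ =>
    (measurable_const.indicator measurableSet_Iic).comp (hY i)).div_const _

lemma measurable_empIncrement (hY : ∀ i, Measurable (Y i)) (n : ℕ) (τ t : ℝ) :
    Measurable fun ω => empIncrement Y F n τ ω t :=
  ((measurable_empCDF hY n t).sub_const _).sub ((measurable_empCDF hY n τ).sub_const _)

lemma cdf_map_eq_of_forall {X : Ω → ℝ} (hX : Measurable X)
    (hF : ∀ t, (μ {ω | X ω ≤ t}).toReal = F t) : ⇑(cdf (μ.map X)) = F := by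
  have := Measure.isProbabilityMeasure_map (μ := μ) hX.aemeasurable
  ext t
  rw [cdf_eq_real, map_measureReal_apply hX measurableSet_Iic]
  exact hF t

lemma monotone_of_forall_measure_le_eq {X : Ω → ℝ} (hX : Measurable X)
    (hF : ∀ t, (μ {ω | X ω ≤ t}).toReal = F t) : Monotone F :=
  cdf_map_eq_of_forall hX hF ▸ monotone_cdf _

lemma mem_Icc_of_forall_measure_le_eq {X : Ω → ℝ} (hX : Measurable X)
    (hF : ∀ t, (μ {ω | X ω ≤ t}).toReal = F t) (t : ℝ) : F t ∈ Set.Icc 0 1 := by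
  rw [← cdf_map_eq_of_forall hX hF]
  exact ⟨cdf_nonneg _ t, cdf_le_one _ t⟩

lemma mgf_natCast_mul_empIncrement_le (hY : ∀ i, Measurable (Y i)) (hiid : iIndepFun Y μ)
    (hF : ∀ i t, (μ {ω | Y i ω ≤ t}).toReal = F t) {n : ℕ} (hn : n ≠ 0) (τ t : ℝ) {s : ℝ}
    (hs : |s| ≤ 1) :
    mgf (fun ω => n * empIncrement Y F n τ ω t) μ s ≤ exp (n * |F t - F τ| * s ^ 2) := by
  set X : ℕ → Ω → ℝ := fun i => stepIncrement τ t ∘ Y i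
  have hX : ∀ i, Measurable (X i) := fun i => (measurable_stepIncrement τ t).comp (hY i)
  have hlaw : ∀ i, IsProbabilityMeasure (μ.map (Y i)) ∧ ⇑(cdf (μ.map (Y i))) = F := fun i =>
    ⟨Measure.isProbabilityMeasure_map (hY i).aemeasurable, cdf_map_eq_of_forall (hY i) (hF i)⟩
  have hmean : ∀ i, μ[X i] = F t - F τ := fun i => by
    have := (hlaw i).1
    rw [← (hlaw i).2, ← integral_stepIncrement]
    exact (integral_map (hY i).aemeasurable
      (measurable_stepIncrement τ t).aestronglyMeasurable).symm
  have habs : ∀ i, μ[fun ω => |X i ω|] = |F t - F τ| := fun i => by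
    have := (hlaw i).1
    rw [← (hlaw i).2, ← integral_abs_stepIncrement]
    exact (integral_map (hY i).aemeasurable
      (measurable_stepIncrement τ t).abs.aestronglyMeasurable).symm
  have hsum : (fun ω => n * empIncrement Y F n τ ω t) =
      fun ω => ∑ i ∈ range n, (X i ω - μ[X i]) := by
    ext ω; simp only [natCast_mul_empIncrement hn, hmean]; rfl
  have hconc : mgf (fun ω => ∑ i ∈ range n, (X i ω - μ[X i])) μ s ≤
      exp (s ^ 2 * ∑ i ∈ range n, μ[fun ω => |X i ω|]) :=
    (hiid.comp (fun _ => stepIncrement τ t) fun _ => measurable_stepIncrement τ t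
      ).mgf_sum_sub_integral_le hX (fun i ω => abs_stepIncrement_le_one τ t _) _ hs
  rw [hsum]
  refine hconc.trans_eq ?_
  rw [sum_congr rfl fun i _ => habs i, sum_const, card_range, nsmul_eq_mul]
  ring_nf

lemma integral_sup'_abs_natCast_mul_empIncrement_le (hY : ∀ i, Measurable (Y i))
    (hiid : iIndepFun Y μ) (hF : ∀ i t, (μ {ω | Y i ω ≤ t}).toReal = F t) {n : ℕ} (hn : n ≠ 0)
    (τ : ℝ) {ι : Type*} {s : Finset ι} (hs : s.Nonempty) (g : ι → ℝ) {q : ℝ}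
    (hq : ∀ k ∈ s, |F (g k) - F τ| ≤ q) :
    ∫ ω, s.sup' hs (fun k => |n * empIncrement Y F n τ ω (g k)|) ∂μ ≤
      2 * √(n * q * log (2 * #s)) + 2 * log (2 * #s) := by
  refine integral_sup'_abs_le_of_mgf_le hs
    (fun k => (measurable_empIncrement hY n τ (g k)).const_mul _)
    (fun k ω => abs_natCast_mul_empIncrement_le (mem_Icc_of_forall_measure_le_eq (hY 0) (hF 0))
      n τ ω (g k))
    fun k hk t ht => ?_
  refine (mgf_natCast_mul_empIncrement_le hY hiid hF hn τ (g k) ht).trans (exp_le_exp.mpr ?_)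
  gcongr
  exact hq k hk

lemma lintegral_iSup_abs_empIncrement_le (hY : ∀ i, Measurable (Y i)) (hiid : iIndepFun Y μ)
    (hF : ∀ i t, (μ {ω | Y i ω ≤ t}).toReal = F t) {τ δ L : ℝ} (hδ : 0 < δ)
    (hFL : ∀ a ∈ Set.Icc (τ - δ) (τ + δ), ∀ b ∈ Set.Icc (τ - δ) (τ + δ), a ≤ b →
      F b - F a ≤ L * (b - a))
    {n : ℕ} (hn : n ≠ 0) :
    ∫⁻ ω, ENNReal.ofReal (⨆ t : {t : ℝ // |t - τ| ≤ δ}, |empIncrement Y F n τ ω t|) ∂μ ≤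
      ENNReal.ofReal ((2 * √(n * (δ * L) * log (2 * (2 * n + 1))) +
        2 * log (2 * (2 * n + 1)) + δ * L) / n) := by
  have hFmono := monotone_of_forall_measure_le_eq (hY 0) (hF 0)
  set g : ℕ → ℝ := fun k => τ - δ + k * (δ / n)
  set N : Ω → ℝ := fun ω => (range (2 * n + 1)).sup' nonempty_range_add_one
    (fun k => |n * empIncrement Y F n τ ω (g k)|)
  have hNint : Integrable N μ := integrable_sup'_abs _
    (fun k => (measurable_empIncrement hY n τ (g k)).const_mul _)
    (fun k ω => abs_natCast_mul_empIncrement_le (mem_Icc_of_forall_measure_le_eq (hY 0) (hF 0))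
      n τ ω (g k))
  have hN0 : ∀ ω, 0 ≤ N ω := fun ω => (abs_nonneg _).trans
    (le_sup' (fun k => |n * empIncrement Y F n τ ω (g k)|) (mem_range.mpr (Nat.succ_pos _)))
  have hEN := integral_sup'_abs_natCast_mul_empIncrement_le hY hiid hF hn τ
    nonempty_range_add_one g fun k hk => abs_sub_le_of_forall_sub_le_mul hFmono hδ hFL
      (sub_add_mul_div_mem_Icc hδ hn (mem_range_succ_iff.mp hk))
  rw [card_range] at hEN
  push_cast at hEN
  have hδL : 0 ≤ δ * L := (abs_nonneg _).trans
    (abs_sub_le_of_forall_sub_le_mul hFmono hδ hFL (t := τ) ⟨by linarith, by linarith⟩)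
  have hint : Integrable (fun ω => N ω / n + δ * L / n) μ :=
    (hNint.div_const _).add (integrable_const _)
  calc ∫⁻ ω, ENNReal.ofReal (⨆ t : {t : ℝ // |t - τ| ≤ δ}, |empIncrement Y F n τ ω t|) ∂μ
      ≤ ∫⁻ ω, ENNReal.ofReal (N ω / n + δ * L / n) ∂μ := lintegral_mono fun ω =>
        ENNReal.ofReal_le_ofReal (iSup_abs_empIncrement_le hFmono hδ hFL hn ω)
    _ = ENNReal.ofReal ((∫ ω, N ω ∂μ) / n + δ * L / n) := by
        rw [← ofReal_integral_eq_lintegral_ofReal hint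
          (.of_forall fun ω => by have := hN0 ω; positivity),
          integral_add (hNint.div_const _) (integrable_const _), integral_div, integral_const]
        simp
    _ ≤ _ := by
        rw [← add_div]
        gcongr

lemma lintegral_iSup_abs_empIncrement_le_two (hF : ∀ t, F t ∈ Set.Icc 0 1) (n : ℕ)
    (τ δ : ℝ) :
    ∫⁻ ω, ENNReal.ofReal (⨆ t : {t : ℝ // |t - τ| ≤ δ}, |empIncrement Y F n τ ω t|) ∂μ ≤
      ENNReal.ofReal 2 := by
  refine (lintegral_mono fun ω => ENNReal.ofReal_le_ofReal
    (Real.iSup_le (fun t : {t : ℝ // |t - τ| ≤ δ} => abs_empIncrement_le_two hF n τ ω t)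
      zero_le_two)).trans ?_
  simp

end EmpiricalProcess

theorem stmt16_general {Ω : Type*} [MeasurableSpace Ω] (μ : Measure Ω) [IsProbabilityMeasure μ]
    (F f : ℝ → ℝ)
    (hF : ∀ t : ℝ, HasDerivAt F (f t) t)
    (Y : ℕ → Ω → ℝ)
    (hYmeas : ∀ i, Measurable (Y i))
    (hiid : iIndepFun (m := fun _ : ℕ => (inferInstance : MeasurableSpace ℝ)) Y μ)
    (hY : ∀ i : ℕ, ∀ t : ℝ, (μ {ω | Y i ω ≤ t}).toReal = F t)
    (τstar : ℝ) (fmax D : ℝ)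
    (hfbd : ∀ t : ℝ, |t - τstar| ≤ D → f t ≤ fmax) :
    ∃ C : ℝ, 0 < C ∧ ∀ n : ℕ, 5 ≤ n → ∀ δ : ℝ, 0 < δ → δ ≤ D →
      (∫⁻ ω, ENNReal.ofReal
          (⨆ t : {t : ℝ // |t - τstar| ≤ δ},
            |(empCDF Y n ω t - F (t : ℝ)) - (empCDF Y n ω τstar - F τstar)|) ∂μ) ≤
        ENNReal.ofReal (C * (Real.sqrt (δ * fmax * Real.log n / n) +
          Real.log n / n)) := by
  have hFL : ∀ a ∈ Set.Icc (τstar - D) (τstar + D), ∀ b ∈ Set.Icc (τstar - D) (τstar + D),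
      a ≤ b → F b - F a ≤ fmax * (b - a) :=
    (convex_Icc _ _).image_sub_le_mul_sub_of_deriv_le
      (fun x _ => (hF x).continuousAt.continuousWithinAt)
      (fun x _ => (hF x).differentiableAt.differentiableWithinAt) fun x hx => by
        rw [interior_Icc] at hx
        rw [(hF x).deriv]
        exact hfbd x (abs_le.mpr ⟨by linarith [hx.1], by linarith [hx.2]⟩)
  refine ⟨4, four_pos, fun n hn δ hδ hδD => ?_⟩
  rcases le_or_gt (δ * fmax * log n / n) 1 with hsmall | hbig
  · have hsub : Set.Icc (τstar - δ) (τstar + δ) ⊆ Set.Icc (τstar - D) (τstar + D) :=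
      Set.Icc_subset_Icc (by linarith) (by linarith)
    exact (lintegral_iSup_abs_empIncrement_le hYmeas hiid hY hδ
      (fun a ha b hb => hFL a (hsub ha) b (hsub hb)) (by omega)).trans
      (ENNReal.ofReal_le_ofReal
        (add_div_le_four_mul_sqrt_add_log_div (by exact_mod_cast hn) hsmall))
  · refine (lintegral_iSup_abs_empIncrement_le_two
      (mem_Icc_of_forall_measure_le_eq (hYmeas 0) (hY 0)) n τstar δ).trans
      (ENNReal.ofReal_le_ofReal ?_)
    have : 1 ≤ √(δ * fmax * log n / n) := one_le_sqrt.mpr hbig.le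
    have : 0 ≤ log n / n := by positivity
    linarith

/-- let `F̂_n` be the empirical CDF of `n` i.i.d. samples from a CDF `F`
with density `f` satisfying `f ≤ f_max` on `|t - τ*| ≤ D`. Then there is a universal
constant `C > 0` such that for all `n ≥ 5` and `0 < δ ≤ D`,
`E[ sup_{|t-τ*|≤δ} |(F̂_n(t) - F(t)) - (F̂_n(τ*) - F(τ*))| ]
  ≤ C(√(δ f_max log n / n) + log n / n)`. -/
theorem stmt16 {Ω : Type*} [MeasurableSpace Ω] (μ : Measure Ω) [IsProbabilityMeasure μ]
    (F f : ℝ → ℝ)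
    (hF : ∀ t : ℝ, HasDerivAt F (f t) t)
    (Y : ℕ → Ω → ℝ)
    (hYmeas : ∀ i, Measurable (Y i))
    (hiid : iIndepFun (m := fun _ : ℕ => (inferInstance : MeasurableSpace ℝ)) Y μ)
    (hY : ∀ i : ℕ, ∀ t : ℝ, (μ {ω | Y i ω ≤ t}).toReal = F t)
    (τstar : ℝ) (fmax D : ℝ) (hD : 0 < D)
    (hfbd : ∀ t : ℝ, |t - τstar| ≤ D → f t ≤ fmax) :
    ∃ C : ℝ, 0 < C ∧ ∀ n : ℕ, 5 ≤ n → ∀ δ : ℝ, 0 < δ → δ ≤ D →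
      (∫⁻ ω, ENNReal.ofReal
          (⨆ t : {t : ℝ // |t - τstar| ≤ δ},
            |(empCDF Y n ω t - F (t : ℝ)) - (empCDF Y n ω τstar - F τstar)|) ∂μ) ≤
        ENNReal.ofReal (C * (Real.sqrt (δ * fmax * Real.log n / n) +
          Real.log n / n)) :=
  stmt16_general μ F f hF Y hYmeas hiid hY τstar fmax D hfbd
end
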